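/- Let G be a graph, σ a linear layout of G with mw(σ,G) = k, and m ≥ 1 an integer. Then the MIM-width of the m-th power Gᵐ under the same layout σ satisfies mw(σ, Gᵐ) ≤ 2k. -/

import Mathlib

open scoped Classical

noncomputable section

namespace LMW

variable {V : Type*} [Fintype V]

/-- The bipartite graph `G[Vᵢ, V̄ᵢ]` consisting of the edges of `G` crossing the cut at
position `i` of the linear layout `σ` (here `Vᵢ` is the set of the first `i` vertices
in the layout). -/
def cutGraph (G : SimpleGraph V) (σ : V ≃ Fin (Fintype.card V)) (i : ℕ) : SimpleGraph V where
  Adj u v := G.Adj u v ∧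
    (((σ u : ℕ) < i ∧ i ≤ (σ v : ℕ)) ∨ ((σ v : ℕ) < i ∧ i ≤ (σ u : ℕ)))
  symm := by
    constructor
    intro u v h
    exact ⟨h.1.symm, h.2.symm⟩
  loopless := by
    constructor
    intro u h
    exact G.loopless.irrefl u h.1

/-- `M` is an induced matching in `H`: a set of edges of `H` such that any two distinct
edges of `M` share no endpoint and no endpoint of one is adjacent in `H` to an endpoint
of the other. -/
def IsInducedMatching (H : SimpleGraph V) (M : Finset (Sym2 V)) : Prop :=
  (↑M : Set (Sym2 V)) ⊆ H.edgeSet ∧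
    ∀ e ∈ M, ∀ f ∈ M, e ≠ f → ∀ u ∈ e, ∀ v ∈ f, u ≠ v ∧ ¬ H.Adj u v

/-- `mim H` is the size of a maximum induced matching of `H`. -/
def mim (H : SimpleGraph V) : ℕ :=
  sSup {n : ℕ | ∃ M : Finset (Sym2 V), IsInducedMatching H M ∧ M.card = n}

/-- The MIM-width of `G` under the linear layout `σ`: the maximum over all cuts
`1 ≤ i < |V|` of the size of a maximum induced matching of the cut graph. -/
def mw (G : SimpleGraph V) (σ : V ≃ Fin (Fintype.card V)) : ℕ :=
  (Finset.Ico 1 (Fintype.card V)).sup fun i => mim (cutGraph G σ i)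

/-- The linear MIM-width of `G`: the minimum of `mw G σ` over all linear layouts `σ`. -/
def lmw (G : SimpleGraph V) : ℕ :=
  sInf {m : ℕ | ∃ σ : V ≃ Fin (Fintype.card V), mw G σ = m}

/-- The `m`-th power of a graph: two distinct vertices are adjacent iff their distance
in `G` is at most `m`. -/
def graphPow (G : SimpleGraph V) (m : ℕ) : SimpleGraph V where
  Adj u v := u ≠ v ∧ G.edist u v ≤ m
  symm := by
    constructor
    intro u v h
    refine ⟨h.1.symm, ?_⟩
    rw [SimpleGraph.edist_comm]
    exact h.2
  loopless := by
    constructor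
    intro u h
    exact h.1 rfl

/-! Let `M` be an induced matching of `Gᵐ[Vᵢ, V̄ᵢ]`. The ends of each `ab ∈ M` (with
`a ∈ Vᵢ`) are joined in `G` by a path of length at most `m`; it leaves `Vᵢ` through an edge `uv`
of `G[Vᵢ, V̄ᵢ]`, at distance `x` from `a`. If the edges `uv`, `u'v'` chosen for two matching
edges `ab ≠ a'b'` interfere (`u ~ v'` in `G`), then `a` reaches `b'` in `x + 1 + d(v', b')`
steps and `a'` reaches `b` in `x' + 3 + d(v, b)` steps; both exceed `m` because `M` is induced,
which forces `x = x' + 1`. Hence the chosen edges of the matching edges with `x` of a fixed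
parity form an induced matching of `G[Vᵢ, V̄ᵢ]`, and `M` splits into two such classes. -/

section Walk

open SimpleGraph

variable {G : SimpleGraph V}

omit [Fintype V] in
theorem _root_.SimpleGraph.Walk.exists_adj_split {a b : V} (p : G.Walk a b) (S : Set V)
    (ha : a ∈ S) (hb : b ∉ S) :
    ∃ (u v : V) (q : G.Walk a u) (r : G.Walk v b),
      G.Adj u v ∧ u ∈ S ∧ v ∉ S ∧ q.length + 1 + r.length = p.length := by
  induction p with
  | nil => exact absurd ha hb
  | @cons a c b hac p ih =>
    by_cases hc : c ∈ S
    · obtain ⟨u, v, q, r, huv, hu, hv, hlen⟩ := ih hc hb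
      exact ⟨u, v, .cons hac q, r, huv, hu, hv, by rw [Walk.length_cons, Walk.length_cons]; omega⟩
    · exact ⟨a, c, .nil, p, hac, ha, hc, by rw [Walk.length_nil, Walk.length_cons]; omega⟩

omit [Fintype V] in
theorem _root_.SimpleGraph.edist_le_edist_add_one_add_edist {a b u v : V} (huv : G.Adj u v) :
    G.edist a b ≤ G.edist a u + 1 + G.edist v b :=
  calc G.edist a b ≤ G.edist a u + G.edist u b := G.edist_triangle
    _ ≤ G.edist a u + (G.edist u v + G.edist v b) := by gcongr; exact G.edist_triangle
    _ = G.edist a u + 1 + G.edist v b := by rw [edist_eq_one_iff_adj.mpr huv, add_assoc]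

end Walk

/-- The data `(a, b, u, v, x)` of the argument above for an edge `ab` of `Gᵐ` leaving `S`,
kept as distance bounds `x`, `y` rather than an explicit path. -/
structure CrossingRoute (G : SimpleGraph V) (S : Set V) (m : ℕ) where
  src : V
  dst : V
  u : V
  v : V
  x : ℕ
  y : ℕ
  src_mem : src ∈ S
  dst_not_mem : dst ∉ S
  u_mem : u ∈ S
  v_not_mem : v ∉ S
  adj : G.Adj u v
  edist_src_u : G.edist src u ≤ x
  edist_v_dst : G.edist v dst ≤ y
  length_le : x + 1 + y ≤ m

namespace CrossingRoute

open SimpleGraph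

variable {G : SimpleGraph V} {S : Set V} {m : ℕ}

omit [Fintype V] in
theorem exists_of_edist_le {a b : V} (ha : a ∈ S) (hb : b ∉ S) (hab : G.edist a b ≤ m) :
    ∃ r : CrossingRoute G S m, r.src = a ∧ r.dst = b := by
  obtain ⟨p, hp⟩ := SimpleGraph.exists_walk_of_edist_ne_top (ne_top_of_le_ne_top
    (ENat.natCast_ne_top m) hab)
  obtain ⟨u, v, q, r, huv, hu, hv, hlen⟩ := p.exists_adj_split S ha hb
  have hpm : p.length ≤ m := by exact_mod_cast hp ▸ hab
  exact ⟨⟨a, b, u, v, q.length, r.length, ha, hb, hu, hv, huv, SimpleGraph.edist_le q,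
    SimpleGraph.edist_le r, hlen.trans_le hpm⟩, rfl, rfl⟩

omit [Fintype V] in
theorem x_eq_of_adj (r₁ r₂ : CrossingRoute G S m) (h₁₂ : (m : ℕ∞) < G.edist r₁.src r₂.dst)
    (h₂₁ : (m : ℕ∞) < G.edist r₂.src r₁.dst) (hadj : G.Adj r₁.u r₂.v) : r₁.x = r₂.x + 1 := by
  have hlt₁ : m < r₁.x + 1 + r₂.y := by
    have : G.edist r₁.src r₂.dst ≤ r₁.x + 1 + r₂.y :=
      (edist_le_edist_add_one_add_edist hadj).trans (by gcongr <;> simp [edist_src_u, edist_v_dst])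
    exact_mod_cast h₁₂.trans_le this
  have hlt₂ : m < r₂.x + 1 + (1 + 1 + r₁.y) := by
    have hv₂ : G.edist r₂.v r₁.dst ≤ 1 + 1 + r₁.y := by
      have := edist_le_edist_add_one_add_edist (a := r₂.v) (b := r₁.dst) r₁.adj
      rw [edist_eq_one_iff_adj.mpr hadj.symm] at this
      exact this.trans (by gcongr; exact r₁.edist_v_dst)
    have : G.edist r₂.src r₁.dst ≤ r₂.x + 1 + (1 + 1 + r₁.y) :=
      (edist_le_edist_add_one_add_edist r₂.adj).trans (by gcongr; exact r₂.edist_src_u)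
    exact_mod_cast h₂₁.trans_le this
  have := r₁.length_le
  have := r₂.length_le
  omega

end CrossingRoute

section Mim

variable {H : SimpleGraph V}

theorem card_le_mim {M : Finset (Sym2 V)} (hM : IsInducedMatching H M) : M.card ≤ mim H :=
  le_csSup ⟨Fintype.card (Sym2 V), by rintro n ⟨N, -, rfl⟩; exact N.card_le_univ⟩ ⟨M, hM, rfl⟩

omit [Fintype V] in
theorem mim_le {n : ℕ} (h : ∀ M, IsInducedMatching H M → M.card ≤ n) : mim H ≤ n :=
  csSup_le ⟨0, ∅, ⟨by simp, by simp⟩, rfl⟩ (by rintro _ ⟨M, hM, rfl⟩; exact h M hM)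

theorem mim_cutGraph_le_mw (G : SimpleGraph V) (σ : V ≃ Fin (Fintype.card V)) {i : ℕ}
    (hi : i ∈ Finset.Ico 1 (Fintype.card V)) : mim (cutGraph G σ i) ≤ mw G σ :=
  Finset.le_sup (f := fun j => mim (cutGraph G σ j)) hi

end Mim

section Cut

variable {G : SimpleGraph V} {σ : V ≃ Fin (Fintype.card V)} {i : ℕ}

theorem isInducedMatching_image_cutGraph {ι : Type*} (s : Finset ι) {u v : ι → V}
    (hu : ∀ j, (σ (u j) : ℕ) < i) (hv : ∀ j, i ≤ (σ (v j) : ℕ)) (hadj : ∀ j, G.Adj (u j) (v j))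
    (hs : ∀ j ∈ s, ∀ k ∈ s, j ≠ k → ¬ G.Adj (u j) (v k)) :
    IsInducedMatching (cutGraph G σ i) (s.image fun j => s(u j, v j)) := by
  refine ⟨?_, ?_⟩
  · intro e he
    obtain ⟨j, -, rfl⟩ := Finset.mem_image.mp he
    exact ⟨hadj j, .inl ⟨hu j, hv j⟩⟩
  · simp only [Finset.mem_image]
    rintro _ ⟨j, hj, rfl⟩ _ ⟨k, hk, rfl⟩ hne p hp q hq
    have hjk : j ≠ k := by rintro rfl; exact hne rfl
    rw [Sym2.mem_iff] at hp hq
    rcases hp with rfl | rfl <;> rcases hq with rfl | rfl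
    · refine ⟨fun h => hs j hj k hk hjk (h ▸ hadj k), fun h => ?_⟩
      rcases h.2 with h | h <;> have := hu j <;> have := hu k <;> omega
    · exact ⟨fun h => (hv k).not_gt (h ▸ hu j), fun h => hs j hj k hk hjk h.1⟩
    · exact ⟨fun h => (hv j).not_gt (h ▸ hu k), fun h => hs k hk j hj hjk.symm h.1.symm⟩
    · refine ⟨fun h => hs j hj k hk hjk (h ▸ hadj j), fun h => ?_⟩
      rcases h.2 with h | h <;> have := hv j <;> have := hv k <;> omega

theorem card_le_mim_cutGraph {ι : Type*} (s : Finset ι) {u v : ι → V}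
    (hu : ∀ j, (σ (u j) : ℕ) < i) (hv : ∀ j, i ≤ (σ (v j) : ℕ)) (hadj : ∀ j, G.Adj (u j) (v j))
    (hs : ∀ j ∈ s, ∀ k ∈ s, j ≠ k → ¬ G.Adj (u j) (v k)) :
    s.card ≤ mim (cutGraph G σ i) := by
  have hinj : Set.InjOn (fun j => s(u j, v j)) s := by
    intro j hj k hk h
    by_contra hjk
    rcases Sym2.eq_iff.mp h with ⟨h, -⟩ | ⟨h, -⟩
    · exact hs j hj k hk hjk (h ▸ hadj k)
    · exact (hv k).not_gt (h ▸ hu j)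
  rw [← Finset.card_image_of_injOn hinj]
  exact card_le_mim (isInducedMatching_image_cutGraph s hu hv hadj hs)

end Cut

section Power

variable {G : SimpleGraph V} {σ : V ≃ Fin (Fintype.card V)} {i m : ℕ}

theorem exists_crossingRoute_of_mem_edgeSet {e : Sym2 V}
    (he : e ∈ (cutGraph (graphPow G m) σ i).edgeSet) :
    ∃ r : CrossingRoute G {w | (σ w : ℕ) < i} m, e = s(r.src, r.dst) := by
  induction e using Sym2.ind with
  | _ a b =>
    obtain ⟨⟨-, hab⟩, ⟨ha, hb⟩ | ⟨hb, ha⟩⟩ := he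
    · obtain ⟨r, hra, hrb⟩ := CrossingRoute.exists_of_edist_le (S := {w | (σ w : ℕ) < i})
        ha hb.not_gt hab
      exact ⟨r, by rw [hra, hrb]⟩
    · obtain ⟨r, hrb, hra⟩ := CrossingRoute.exists_of_edist_le (S := {w | (σ w : ℕ) < i})
        hb ha.not_gt (SimpleGraph.edist_comm ▸ hab)
      exact ⟨r, by rw [hra, hrb, Sym2.eq_swap]⟩

theorem lt_edist_of_isInducedMatching {M : Finset (Sym2 V)}
    (hM : IsInducedMatching (cutGraph (graphPow G m) σ i) M) {e f : Sym2 V} (he : e ∈ M)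
    (hf : f ∈ M) (hef : e ≠ f) {a b : V} (ha : a ∈ e) (hb : b ∈ f) (ha' : (σ a : ℕ) < i)
    (hb' : i ≤ (σ b : ℕ)) : (m : ℕ∞) < G.edist a b := by
  obtain ⟨hne, hnadj⟩ := hM.2 e he f hf hef a ha b hb
  exact not_le.mp fun hab => hnadj ⟨⟨hne, hab⟩, .inl ⟨ha', hb'⟩⟩

theorem card_le_two_mul_mim {M : Finset (Sym2 V)}
    (hM : IsInducedMatching (cutGraph (graphPow G m) σ i) M) :
    M.card ≤ 2 * mim (cutGraph G σ i) := by
  choose r hr using fun e : M => exists_crossingRoute_of_mem_edgeSet (hM.1 e.2)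
  have hmem_src (e : M) : (r e).src ∈ e.1 := hr e ▸ Sym2.mem_mk_left _ _
  have hmem_dst (e : M) : (r e).dst ∈ e.1 := hr e ▸ Sym2.mem_mk_right _ _
  have hshift (e f : M) (hef : e ≠ f) (hadj : G.Adj (r e).u (r f).v) :
      (r e).x = (r f).x + 1 := by
    have hef' : e.1 ≠ f.1 := Subtype.coe_ne_coe.mpr hef
    refine (r e).x_eq_of_adj (r f) ?_ ?_ hadj
    · exact lt_edist_of_isInducedMatching hM e.2 f.2 hef' (hmem_src e) (hmem_dst f)
        (r e).src_mem (not_lt.mp (r f).dst_not_mem)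
    · exact lt_edist_of_isInducedMatching hM f.2 e.2 hef'.symm (hmem_src f) (hmem_dst e)
        (r f).src_mem (not_lt.mp (r e).dst_not_mem)
  have hclass (s : Finset M) (hs : ∀ e ∈ s, ∀ f ∈ s, (r e).x % 2 = (r f).x % 2) :
      s.card ≤ mim (cutGraph G σ i) :=
    card_le_mim_cutGraph s (fun e => (r e).u_mem) (fun e => not_lt.mp (r e).v_not_mem)
      (fun e => (r e).adj) fun e he f hf hef hadj => by
        have := hshift e f hef hadj; have := hs e he f hf; omega
  have heven := hclass (Finset.univ.filter fun e => (r e).x % 2 = 0) (by simp +contextual)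
  have hodd := hclass (Finset.univ.filter fun e => ¬ (r e).x % 2 = 0) (by
    simp only [Finset.mem_filter]; omega)
  calc M.card = Fintype.card M := (Fintype.card_coe M).symm
    _ = _ := (Finset.card_filter_add_card_filter_not (fun e => (r e).x % 2 = 0)).symm
    _ ≤ 2 * mim (cutGraph G σ i) := by omega

end Power

theorem mw_graphPow_le_general {V : Type*} [Fintype V] (G : SimpleGraph V)
    (σ : V ≃ Fin (Fintype.card V)) (k m : ℕ) (hσ : mw G σ = k) :
    mw (graphPow G m) σ ≤ 2 * k :=
  hσ ▸ Finset.sup_le fun _ hi => mim_le fun _ hM =>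
    (card_le_two_mul_mim hM).trans (Nat.mul_le_mul_left 2 (mim_cutGraph_le_mw G σ hi))

/-- If `G` has MIM-width `k` under the layout `σ`, then for any `m ≥ 1` the `m`-th power
`Gᵐ` has MIM-width at most `2k` under the same layout `σ`. -/
theorem mw_graphPow_le {V : Type*} [Fintype V] (G : SimpleGraph V)
    (σ : V ≃ Fin (Fintype.card V)) (k m : ℕ) (hm : 1 ≤ m) (hσ : mw G σ = k) :
    mw (graphPow G m) σ ≤ 2 * k :=
  mw_graphPow_le_general G σ k m hσ

end LMW
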